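/- Let D be an oriented cactus and C a directed leaf cycle (a directed cycle with exactly one cut-vertex w) that is not a trap cycle. Then V(C) \ {w} is a co-convex set of D, i.e., V(D) \ (V(C)\{w}) is geodesically convex. -/

import Mathlib

variable {V : Type*}

/-- A directed walk from `u` to `v` given as its list of vertices. -/
def DiwalkFrom (A : V → V → Prop) (u v : V) (l : List V) : Prop :=
  l.Chain' A ∧ l.head? = some u ∧ l.getLast? = some v

/-- A `(u,v)`-geodesic: a directed walk of minimum length (hence a shortest directed path). -/
def IsGeodesic (A : V → V → Prop) (u v : V) (l : List V) : Prop :=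
  DiwalkFrom A u v l ∧ ∀ l', DiwalkFrom A u v l' → l.length ≤ l'.length

/-- The interval `I(S)`: `S` together with all vertices on geodesics between members of `S`. -/
def geoInterval (A : V → V → Prop) (S : Set V) : Set V :=
  S ∪ {w | ∃ u ∈ S, ∃ v ∈ S, ∃ l, IsGeodesic A u v l ∧ w ∈ l}

def GeoConvex (A : V → V → Prop) (S : Set V) : Prop := geoInterval A S = S

/-- The geodesic convex hull of `S`. -/
def geoHull (A : V → V → Prop) (S : Set V) : Set V := ⋂₀ {T | S ⊆ T ∧ GeoConvex A T}

def IsHullSet (A : V → V → Prop) (S : Set V) : Prop := geoHull A S = Set.univ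

def IsGeodeticSet (A : V → V → Prop) (S : Set V) : Prop := geoInterval A S = Set.univ

noncomputable def hullNumber (A : V → V → Prop) : ℕ :=
  sInf {n | ∃ S : Set V, S.Finite ∧ S.ncard = n ∧ IsHullSet A S}

noncomputable def geodeticNumber (A : V → V → Prop) : ℕ :=
  sInf {n | ∃ S : Set V, S.Finite ∧ S.ncard = n ∧ IsGeodeticSet A S}

def IsSource (A : V → V → Prop) (v : V) : Prop := ∀ u, ¬ A u v
def IsSink (A : V → V → Prop) (v : V) : Prop := ∀ w, ¬ A v w
def IsTransitiveVtx (A : V → V → Prop) (v : V) : Prop :=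
  (∃ u, A u v) ∧ (∃ w, A v w) ∧ ∀ u w, A u v → A v w → A u w
def IsExtremeVtx (A : V → V → Prop) (v : V) : Prop :=
  IsSource A v ∨ IsSink A v ∨ IsTransitiveVtx A v

/-- An oriented graph: an asymmetric (hence irreflexive) arc relation. -/
def Oriented (A : V → V → Prop) : Prop := ∀ u v, A u v → ¬ A v u

/-- Directed distance, `⊤` if there is no directed walk. -/
noncomputable def ddist (A : V → V → Prop) (u v : V) : ℕ∞ :=
  sInf {n : ℕ∞ | ∃ l, DiwalkFrom A u v l ∧ (l.length : ℕ∞) = n + 1}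


/-- A cactus: connected, and any two cycles sharing an edge have the same edge set
(i.e., every edge lies in at most one cycle). -/
def IsCactus {V : Type*} (G : SimpleGraph V) : Prop :=
  G.Connected ∧ ∀ ⦃x y : V⦄ (c₁ : G.Walk x x) (c₂ : G.Walk y y),
    c₁.IsCycle → c₂.IsCycle → (∃ e, e ∈ c₁.edges ∧ e ∈ c₂.edges) →
    (∀ e, e ∈ c₁.edges ↔ e ∈ c₂.edges)

/-- `v` is a cut-vertex of the connected graph `G`. -/
def IsCutVertex {V : Type*} (G : SimpleGraph V) (v : V) : Prop :=
  G.Connected ∧ ¬ (G.induce {w | w ≠ v}).Connected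

/-! A geodesic is a path. If every arc with exactly one end in `T` has its other end at `w`,
a directed walk that starts and ends outside `T` but visits `T` passes through `w` both before
and after that visit, so it is not a path; hence the complement of `T` is convex. In a cactus,
every neighbour of a vertex of a cycle `C` that is not a cut-vertex lies on `C`, so
`T = V(C) \ {w}` is such a set when `w` is the only cut-vertex on `C`. -/

theorem List.exists_eq_append_cons_append_cons_of_not_nodup {α : Type*} {l : List α}
    (h : ¬ l.Nodup) : ∃ a l₁ l₂ l₃, l = l₁ ++ a :: l₂ ++ a :: l₃ := by
  obtain ⟨a, h⟩ : ∃ a, [a, a].Sublist l := by simpa [List.nodup_iff_sublist] using h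
  obtain ⟨r₁, r₂, rfl, h₁, h₂⟩ := List.cons_sublist_iff.1 h
  obtain ⟨p, q, rfl⟩ := List.append_of_mem h₁
  obtain ⟨r, s, rfl⟩ := List.append_of_mem (List.singleton_sublist.1 h₂)
  exact ⟨a, p, q ++ r, s, by simp⟩

theorem List.IsChain.mem_of_exit {α : Type*} {R : α → α → Prop} {T : Set α} {w : α}
    (hT : ∀ a b, R a b → a ∈ T → b ∉ T → b = w) :
    ∀ {a : α} {l : List α}, (a :: l).IsChain R → a ∈ T → (∃ b ∈ l, b ∉ T) → w ∈ l
  | _, [], _, _, ⟨_, hb, _⟩ => absurd hb List.not_mem_nil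
  | a, c :: l, h, ha, ⟨b, hb, hbT⟩ => by
    obtain ⟨hac, hl⟩ := List.isChain_cons_cons.1 h
    by_cases hc : c ∈ T
    · have hbl : b ∈ l := (List.mem_cons.1 hb).resolve_left (by rintro rfl; exact hbT hc)
      exact List.mem_cons_of_mem c (mem_of_exit hT hl hc ⟨b, hbl, hbT⟩)
    · exact hT a c hac ha hc ▸ List.mem_cons_self

section Geodesic

variable {A : V → V → Prop} {u v : V}

theorem DiwalkFrom.cut_loop {l₁ l₂ l₃ : List V} {a : V}
    (h : DiwalkFrom A u v (l₁ ++ a :: l₂ ++ a :: l₃)) : DiwalkFrom A u v (l₁ ++ a :: l₃) := by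
  obtain ⟨hch, hhead, hlast⟩ := h
  refine ⟨?_, ?_, ?_⟩
  · have hjoin := (List.isChain_append.1 hch.left_of_append).2.2
    exact List.isChain_append.2 ⟨hch.left_of_append.left_of_append, hch.right_of_append,
      fun x hx y hy => hjoin x hx y (by simpa using hy)⟩
  · cases l₁ <;> simpa using hhead
  · rwa [List.getLast?_append_of_ne_nil _ (List.cons_ne_nil _ _)] at hlast ⊢

theorem DiwalkFrom.reverse {l : List V} (h : DiwalkFrom A u v l) :
    DiwalkFrom (fun a b => A b a) v u l.reverse :=
  ⟨List.isChain_reverse.2 h.1, by simpa using h.2.2, by simpa using h.2.1⟩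

theorem IsGeodesic.nodup {l : List V} (h : IsGeodesic A u v l) : l.Nodup := by
  by_contra hl
  obtain ⟨a, l₁, l₂, l₃, rfl⟩ := List.exists_eq_append_cons_append_cons_of_not_nodup hl
  have := h.2 _ h.1.cut_loop
  simp only [List.length_append, List.length_cons] at this
  omega

theorem DiwalkFrom.mem_of_exit {T : Set V} {w : V}
    (hT : ∀ a b, A a b → a ∈ T → b ∉ T → b = w) {l₁ l₂ : List V} {m : V}
    (h : DiwalkFrom A u v (l₁ ++ m :: l₂)) (hm : m ∈ T) (hv : v ∉ T) : w ∈ l₂ := by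
  refine h.1.right_of_append.mem_of_exit hT hm ⟨v, ?_, hv⟩
  have hv' : v ∈ m :: l₂ := List.mem_of_getLast? (by simpa [List.getLast?_append] using h.2.2)
  exact (List.mem_cons.1 hv').resolve_left (by rintro rfl; exact hv hm)

theorem geoConvex_compl_of_gate {T : Set V} {w : V}
    (hT : ∀ a b, A a b ∨ A b a → a ∈ T → b ∉ T → b = w) : GeoConvex A Tᶜ := by
  refine Set.union_eq_left.2 ?_
  rintro m ⟨u, hu, v, hv, l, hl, hml⟩ hm
  obtain ⟨l₁, l₂, rfl⟩ := List.append_of_mem hml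
  have hafter : w ∈ l₂ := hl.1.mem_of_exit (fun a b hab => hT a b (.inl hab)) hm hv
  have hbefore : w ∈ l₁.reverse := by
    have hrev := hl.1.reverse
    rw [List.reverse_append, List.reverse_cons, List.append_assoc, List.singleton_append] at hrev
    exact hrev.mem_of_exit (fun a b hab => hT a b (.inr hab)) hm hu
  exact (List.nodup_append.1 hl.nodup).2.2 w (List.mem_reverse.1 hbefore) w
    (List.mem_cons_of_mem m hafter) rfl

end Geodesic

namespace SimpleGraph

theorem exists_isCycle_of_adj_of_adj {G : SimpleGraph V} {v s z : V}
    (hconn : (G.induce {u | u ≠ v}).Connected) (hs : G.Adj v s) (hz : G.Adj v z) (hsz : s ≠ z) :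
    ∃ c : G.Walk v v, c.IsCycle ∧ s(v, s) ∈ c.edges ∧ s(v, z) ∈ c.edges := by
  classical
  obtain ⟨q₀⟩ := hconn.preconnected ⟨z, hz.ne.symm⟩ ⟨s, hs.ne.symm⟩
  obtain ⟨q, hq, hvq⟩ : ∃ q : G.Walk z s, q.IsPath ∧ v ∉ q.support := by
    have hpath := q₀.toPath.property.map
      (f := (Embedding.induce (G := G) {u | u ≠ v}).toHom) Subtype.val_injective
    have hv : v ∉ (q₀.toPath.val.map (Embedding.induce (G := G) _).toHom).support := by
      rw [Walk.support_map, List.mem_map]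
      rintro ⟨y, -, hy⟩
      exact y.property hy
    exact ⟨_, hpath, hv⟩
  have hsz' : s(v, z) ∉ (q.concat hs.symm).edges := by
    rw [Walk.edges_concat, List.concat_eq_append, List.mem_append, List.mem_singleton,
      Sym2.eq_iff]
    rintro (h | ⟨rfl, -⟩ | ⟨-, rfl⟩)
    · exact hvq (q.fst_mem_support_of_mem_edges h)
    · exact hs.ne rfl
    · exact hsz rfl
  refine ⟨.cons hz (q.concat hs.symm),
    (Walk.cons_isCycle_iff _ hz).2 ⟨hq.concat hvq hs.symm, hsz'⟩, ?_, by simp⟩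
  simp [Walk.edges_concat, Sym2.eq_swap]

end SimpleGraph

theorem IsCactus.mem_support_of_adj {G : SimpleGraph V} (hG : IsCactus G) {x v z : V}
    {c : G.Walk x x} (hc : c.IsCycle) (hv : v ∈ c.support) (hcut : ¬ IsCutVertex G v)
    (hz : G.Adj v z) : z ∈ c.support := by
  obtain ⟨e, he, hve⟩ :=
    (SimpleGraph.Walk.mem_support_iff_exists_mem_edges_of_not_nil hc.not_nil).1 hv
  obtain ⟨s, rfl⟩ := Sym2.mem_iff_exists.1 hve
  by_cases hsz : s = z
  · exact hsz ▸ c.snd_mem_support_of_mem_edges he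
  have hconn : (G.induce {u | u ≠ v}).Connected := by_contra fun h => hcut ⟨hG.1, h⟩
  obtain ⟨c', hc', hs', hz'⟩ :=
    SimpleGraph.exists_isCycle_of_adj_of_adj hconn (c.adj_of_mem_edges he) hz hsz
  exact c.snd_mem_support_of_mem_edges ((hG.2 c' c hc' hc ⟨_, hs', he⟩ _).1 hz')

theorem stmt_18_general (G : SimpleGraph V) (hG : IsCactus G)
    (A : V → V → Prop)
    (horient : ∀ u v, G.Adj u v ↔ (A u v ∨ A v u))
    (x : V) (c : G.Walk x x) (hc : c.IsCycle)
    (w : V)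
    (honly : ∀ u ∈ c.support, IsCutVertex G u → u = w) :
    GeoConvex A {v | ¬ (v ∈ c.support ∧ v ≠ w)} := by
  refine geoConvex_compl_of_gate (T := {v | v ∈ c.support ∧ v ≠ w}) (w := w) ?_
  rintro a b hab ⟨ha, haw⟩ hb
  by_contra hbw
  exact hb ⟨hG.mem_support_of_adj hc ha (fun hcut => haw (honly a ha hcut)) ((horient a b).2 hab),
    hbw⟩

/-- in an oriented cactus, for a directed leaf cycle `C` with unique
cut-vertex `w` that is not a trap cycle, `V(C) \ {w}` is co-convex. -/
theorem stmt_18 (G : SimpleGraph V) (hG : IsCactus G)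
    (A : V → V → Prop) (hA : Oriented A)
    (horient : ∀ u v, G.Adj u v ↔ (A u v ∨ A v u))
    (x : V) (c : G.Walk x x) (hc : c.IsCycle)
    (hdir : ∀ d ∈ c.darts, A d.toProd.1 d.toProd.2)
    (w : V) (hw : w ∈ c.support) (hwcut : IsCutVertex G w)
    (honly : ∀ u ∈ c.support, IsCutVertex G u → u = w)
    (hnottrap : ¬ (((∃ z, z ∉ c.support ∧ A z w) ∧ ¬ ∃ z, z ∉ c.support ∧ A w z) ∨
                   ((∃ z, z ∉ c.support ∧ A w z) ∧ ¬ ∃ z, z ∉ c.support ∧ A z w))) :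
    GeoConvex A {v | ¬ (v ∈ c.support ∧ v ≠ w)} :=
  stmt_18_general G hG A horient x c hc w honly
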